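/- Let d ≥ 2, Q a symmetric positive semi-definite d×d matrix with kernel spanned by the all-ones vector 1_d, and l ∈ ℝ^d with lᵀ1_d < 0. Then the integral ∫_{(0,∞)^d \ (0,1]^d} exp( -½ (log z)ᵀ Q (log z) + lᵀ log z ) ∏_{i=1}^d z_i^{-1} dz is finite, so the Hüsler-Reiss Pareto density is well defined. -/

import Mathlib

/-!
Substituting `z = exp x` turns the integral into `∫ exp (-½ xᵀQx + lᵀx) dx` over
`{x | ∃ i, 0 < x i}`, which is at most the sum over `i` of the integrals over the half-spaces
`{0 < x i}`. On such a half-space write `x = t • 1 + v` with `v i = 0`. Since `Q 1 = 0` and `Q` is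
symmetric, the exponent becomes `-½ vᵀQv + lᵀv + (∑ l) t`, so the integral factors into
`∫_{t > 0} exp ((∑ l) t) dt = -(∑ l)⁻¹` times a Gaussian integral over the hyperplane `{v i = 0}`,
on which `Q` is positive definite because its kernel is spanned by `1`.
-/

open MeasureTheory Matrix

open Real Set ContinuousLinearMap

theorem hasFDerivAt_pi_exp {ι : Type*} [Fintype ι] (x : ι → ℝ) :
    HasFDerivAt (fun x i ↦ exp (x i))
      (pi fun i ↦ (smulRight (1 : ℝ →L[ℝ] ℝ) (exp (x i))).comp (proj i)) x :=
  hasFDerivAt_pi.2 fun i ↦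
    (hasDerivAt_exp (x i)).hasFDerivAt.comp (g := exp) x (hasFDerivAt_apply i x)

theorem image_pi_exp {ι : Type*} (s : Set (ι → ℝ)) :
    (fun x i ↦ exp (x i)) '' s = {z | (∀ i, 0 < z i) ∧ (fun i ↦ log (z i)) ∈ s} := by
  ext z
  constructor
  · rintro ⟨x, hx, rfl⟩
    exact ⟨fun i ↦ exp_pos _, by simpa only [log_exp] using hx⟩
  · rintro ⟨hz, hs⟩
    exact ⟨_, hs, funext fun i ↦ exp_log (hz i)⟩

theorem lintegral_log_pi_mul_prod_inv {ι : Type*} [Fintype ι] {s : Set (ι → ℝ)}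
    (hs : MeasurableSet s) (g : (ι → ℝ) → ENNReal) :
    ∫⁻ z in {z : ι → ℝ | (∀ i, 0 < z i) ∧ (fun i ↦ log (z i)) ∈ s},
        g (fun i ↦ log (z i)) * ENNReal.ofReal (∏ i, (z i)⁻¹) = ∫⁻ x in s, g x := by
  have hinj : InjOn (fun (x : ι → ℝ) i ↦ exp (x i)) s :=
    fun x _ y _ h ↦ funext fun i ↦ exp_injective (congrFun h i)
  rw [← image_pi_exp, lintegral_image_eq_lintegral_abs_det_fderiv_mul volume hs
    (fun x _ ↦ (hasFDerivAt_pi_exp x).hasFDerivWithinAt) hinj]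
  refine setLIntegral_congr_fun hs fun x _ ↦ ?_
  have hprod : 0 < ∏ i, exp (x i) := Finset.prod_pos fun i _ ↦ exp_pos _
  simp only [det_pi, det_smulRight, one_apply_eq_self, one_mul, log_exp,
    Finset.prod_inv_distrib, abs_of_pos hprod]
  rw [mul_left_comm, ← ENNReal.ofReal_mul hprod.le, mul_inv_cancel₀ hprod.ne', ENNReal.ofReal_one,
    mul_one]

theorem exists_pos_mul_norm_sq_le {E : Type*} [NormedAddCommGroup E] [NormedSpace ℝ E]
    [FiniteDimensional ℝ E] {f : E → ℝ} (hf : Continuous f)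
    (hsmul : ∀ (c : ℝ) x, f (c • x) = c ^ 2 * f x) (hpos : ∀ x ≠ 0, 0 < f x) :
    ∃ ε > 0, ∀ x, ε * ‖x‖ ^ 2 ≤ f x := by
  have hf0 : f 0 = 0 := by simpa using hsmul 0 0
  rcases subsingleton_or_nontrivial E with hE | hE
  · exact ⟨1, one_pos, fun x ↦ by simp [Subsingleton.elim x 0, hf0]⟩
  obtain ⟨u, hu, hmin⟩ := (isCompact_sphere (0 : E) 1).exists_isMinOn
    (NormedSpace.sphere_nonempty.2 zero_le_one) hf.continuousOn
  refine ⟨f u, hpos u (ne_zero_of_mem_unit_sphere ⟨u, hu⟩), fun x ↦ ?_⟩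
  rcases eq_or_ne x 0 with rfl | hx
  · simp [hf0]
  have hx' : ‖x‖⁻¹ • x ∈ Metric.sphere (0 : E) 1 := by
    simp [norm_smul, hx]
  calc f u * ‖x‖ ^ 2 ≤ f (‖x‖⁻¹ • x) * ‖x‖ ^ 2 := by gcongr; exact hmin hx'
    _ = f x := by
      rw [hsmul, inv_pow, mul_comm, ← mul_assoc, mul_inv_cancel₀ (by positivity), one_mul]

theorem integrable_exp_neg_mul_sum_sq_add {ι : Type*} [Fintype ι] {b : ℝ} (hb : 0 < b)
    (c : ι → ℝ) :
    Integrable fun v : ι → ℝ ↦ exp (-b * ∑ i, v i ^ 2 + ∑ i, c i * v i) := by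
  have h := (GaussianFourier.integrable_cexp_neg_mul_sum_add (b := b) (by simpa)
    fun i ↦ (c i : ℂ)).norm
  simpa [Complex.norm_exp, ← Complex.ofReal_pow] using h

theorem lintegral_exp_mul_Ioi {a : ℝ} (ha : a < 0) (c : ℝ) :
    ∫⁻ t in Ioi c, ENNReal.ofReal (exp (a * t)) = ENNReal.ofReal (-exp (a * c) / a) := by
  rw [← integral_exp_mul_Ioi ha, ofReal_integral_eq_lintegral_ofReal
    (integrableOn_exp_mul_Ioi ha c) (ae_of_all _ fun t ↦ (exp_pos _).le)]

theorem Fin.insertNth_const {α : Type*} {n : ℕ} (i : Fin (n + 1)) (a : α) :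
    i.insertNth a (fun _ ↦ a) = fun _ ↦ a :=
  Fin.insertNth_eq_iff.2 ⟨rfl, rfl⟩

theorem measurePreserving_const_add_insertNth_zero {n : ℕ} (i : Fin (n + 1)) :
    MeasurePreserving (fun p : ℝ × (Fin n → ℝ) ↦ (fun _ ↦ p.1) + i.insertNth 0 p.2) := by
  have hshear : MeasurePreserving (fun p : ℝ × (Fin n → ℝ) ↦ (p.1, p.2 + fun _ ↦ p.1)) :=
    (MeasurePreserving.id volume).skew_product (g := fun t w ↦ w + fun _ ↦ t)
      (measurable_snd.add (measurable_pi_lambda _ fun _ ↦ measurable_fst))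
      (ae_of_all _ fun t ↦ map_add_right_eq_self volume _)
  convert (volume_preserving_piFinSuccAbove (fun _ : Fin (n + 1) ↦ ℝ) i).symm.comp hshear
    using 1
  ext p : 1
  simp [MeasurableEquiv.piFinSuccAbove_symm_apply, Fin.insertNthEquiv, ← Fin.insertNth_const i p.1,
    ← Fin.insertNth_add, add_comm]

theorem Matrix.IsSymm.dotProduct_mulVec_add_of_mulVec_eq_zero {ι R : Type*} [Fintype ι]
    [CommRing R] {Q : Matrix ι ι R} (hQ : Q.IsSymm) {u : ι → R} (hu : Q *ᵥ u = 0)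
    (v : ι → R) : (u + v) ⬝ᵥ Q *ᵥ (u + v) = v ⬝ᵥ Q *ᵥ v := by
  rw [mulVec_add, hu, zero_add, add_dotProduct, dotProduct_mulVec u, ← mulVec_transpose, hQ.eq,
    hu, zero_dotProduct, zero_add]

theorem dotProduct_insertNth_zero {n : ℕ} (l : Fin (n + 1) → ℝ) (i : Fin (n + 1))
    (w : Fin n → ℝ) : l ⬝ᵥ i.insertNth 0 w = ∑ j, l (i.succAbove j) * w j := by
  simp [dotProduct, Fin.sum_univ_succAbove _ i]

noncomputable def gaussianExponent {ι : Type*} [Fintype ι] (Q : Matrix ι ι ℝ) (l x : ι → ℝ) : ℝ :=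
  -(1 / 2) * (x ⬝ᵥ Q *ᵥ x) + l ⬝ᵥ x

theorem Matrix.IsSymm.gaussianExponent_const_add {ι : Type*} [Fintype ι] {Q : Matrix ι ι ℝ}
    (hQ : Q.IsSymm) (hconst : ∀ c : ℝ, Q *ᵥ (fun _ ↦ c) = 0) (l : ι → ℝ) (t : ℝ) (v : ι → ℝ) :
    gaussianExponent Q l ((fun _ ↦ t) + v) = (∑ i, l i) * t + gaussianExponent Q l v := by
  rw [gaussianExponent, gaussianExponent, hQ.dotProduct_mulVec_add_of_mulVec_eq_zero (hconst t),
    dotProduct_add]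
  simp only [dotProduct, Finset.sum_mul]
  ring

section

variable {n : ℕ} {Q : Matrix (Fin (n + 1)) (Fin (n + 1)) ℝ}

theorem Matrix.PosSemidef.dotProduct_mulVec_insertNth_zero_pos (hQ : Q.PosSemidef)
    (hker : ∀ v, Q *ᵥ v = 0 → ∃ c : ℝ, v = fun _ ↦ c) (i : Fin (n + 1)) {w : Fin n → ℝ}
    (hw : w ≠ 0) : 0 < i.insertNth 0 w ⬝ᵥ Q *ᵥ i.insertNth 0 w := by
  refine (hQ.dotProduct_mulVec_nonneg _).lt_of_ne' fun h ↦ hw ?_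
  obtain ⟨c, hc⟩ := hker (i.insertNth 0 w)
    ((hQ.dotProduct_mulVec_zero_iff _).1 (by rwa [star_trivial]))
  have hc0 : c = 0 := by simpa only [Fin.insertNth_apply_same] using (congrFun hc i).symm
  ext j
  simpa only [Fin.insertNth_apply_succAbove, hc0, Pi.zero_apply] using congrFun hc (i.succAbove j)

theorem Matrix.PosSemidef.exists_pos_mul_sum_sq_le_insertNth_zero (hQ : Q.PosSemidef)
    (hker : ∀ v, Q *ᵥ v = 0 → ∃ c : ℝ, v = fun _ ↦ c) (i : Fin (n + 1)) :
    ∃ ε > 0, ∀ w : Fin n → ℝ, ε * ∑ j, w j ^ 2 ≤ i.insertNth 0 w ⬝ᵥ Q *ᵥ i.insertNth 0 w := by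
  have hsmul (c : ℝ) (w : Fin n → ℝ) : i.insertNth 0 (c • w) = c • i.insertNth (0 : ℝ) w :=
    Fin.insertNth_eq_iff.2 ⟨by simp, by ext; simp [Fin.removeNth]⟩
  obtain ⟨ε, hε, hle⟩ := exists_pos_mul_norm_sq_le
    (f := fun v : EuclideanSpace ℝ (Fin n) ↦ i.insertNth 0 v.ofLp ⬝ᵥ Q *ᵥ i.insertNth 0 v.ofLp)
    (by fun_prop)
    (fun c v ↦ by
      simp only [WithLp.ofLp_smul, hsmul, mulVec_smul, dotProduct_smul, smul_dotProduct,
        smul_eq_mul]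
      ring)
    (fun v hv ↦ hQ.dotProduct_mulVec_insertNth_zero_pos hker i (by simpa using hv))
  exact ⟨ε, hε, fun w ↦ by simpa [EuclideanSpace.real_norm_sq_eq] using hle (WithLp.toLp 2 w)⟩

theorem Matrix.PosSemidef.lintegral_exp_gaussianExponent_insertNth_zero_lt_top
    (hQ : Q.PosSemidef) (hker : ∀ v, Q *ᵥ v = 0 → ∃ c : ℝ, v = fun _ ↦ c)
    (l : Fin (n + 1) → ℝ) (i : Fin (n + 1)) :
    ∫⁻ w : Fin n → ℝ, ENNReal.ofReal (exp (gaussianExponent Q l (i.insertNth 0 w))) < ⊤ := by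
  obtain ⟨ε, hε, hle⟩ := hQ.exists_pos_mul_sum_sq_le_insertNth_zero hker i
  refine (lintegral_mono fun w ↦ ENNReal.ofReal_le_ofReal (exp_le_exp.2 ?_)).trans_lt
    (integrable_exp_neg_mul_sum_sq_add (half_pos hε) fun j ↦ l (i.succAbove j)).lintegral_lt_top
  rw [gaussianExponent, dotProduct_insertNth_zero]
  linarith [hle w]

theorem setLIntegral_exp_gaussianExponent_eq_mul_lintegral_insertNth_zero (hQ : Q.IsSymm)
    (hconst : ∀ c : ℝ, Q *ᵥ (fun _ ↦ c) = 0) {l : Fin (n + 1) → ℝ} (hl : ∑ i, l i < 0)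
    (i : Fin (n + 1)) :
    ∫⁻ x in {x | 0 < x i}, ENNReal.ofReal (exp (gaussianExponent Q l x)) =
      ENNReal.ofReal (-(∑ i, l i)⁻¹) *
        ∫⁻ w : Fin n → ℝ, ENNReal.ofReal (exp (gaussianExponent Q l (i.insertNth 0 w))) := by
  have hpre : (fun p : ℝ × (Fin n → ℝ) ↦ (fun _ ↦ p.1) + i.insertNth 0 p.2) ⁻¹' {x | 0 < x i} =
      Ioi 0 ×ˢ univ := by
    ext p; simp
  rw [← (measurePreserving_const_add_insertNth_zero i).setLIntegral_comp_preimage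
    (measurableSet_lt measurable_const (measurable_pi_apply i))
    (by unfold gaussianExponent; fun_prop), hpre, Measure.volume_eq_prod, ← Measure.prod_restrict,
    Measure.restrict_univ]
  simp_rw [hQ.gaussianExponent_const_add hconst, exp_add, ENNReal.ofReal_mul (exp_pos _).le]
  rw [lintegral_prod_mul (f := fun t ↦ ENNReal.ofReal (exp ((∑ i, l i) * t)))
    (g := fun w ↦ ENNReal.ofReal (exp (gaussianExponent Q l (i.insertNth 0 w))))
    (by fun_prop) (by unfold gaussianExponent; fun_prop), lintegral_exp_mul_Ioi hl]
  simp [div_eq_mul_inv]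

end

theorem hr_pareto_normalizing_constant_finite
    {d : ℕ}
    (Q : Matrix (Fin d) (Fin d) ℝ) (l : Fin d → ℝ)
    (hQ : Q.PosSemidef)
    (hker : ∀ v : Fin d → ℝ, Q.mulVec v = 0 ↔ ∃ c : ℝ, v = fun _ => c)
    (hl : ∑ i, l i < 0) :
    ∫⁻ z in {z : Fin d → ℝ | (∀ i, 0 < z i) ∧ ¬ ∀ i, z i ≤ 1},
        ENNReal.ofReal
          (Real.exp (-(1 / 2) *
              ((fun i => Real.log (z i)) ⬝ᵥ Q.mulVec fun i => Real.log (z i)) +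
              l ⬝ᵥ fun i => Real.log (z i)) *
            ∏ i, (z i)⁻¹) < ⊤ := by
  have hsymm : Q.IsSymm := isHermitian_iff_isSymm.1 hQ.isHermitian
  have hregion : {z : Fin d → ℝ | (∀ i, 0 < z i) ∧ ¬ ∀ i, z i ≤ 1} =
      {z | (∀ i, 0 < z i) ∧ (fun i ↦ log (z i)) ∈ ⋃ i, {x : Fin d → ℝ | 0 < x i}} := by
    ext z
    simp only [mem_ofPred_eq, mem_iUnion, not_forall, not_le, and_congr_right_iff]
    exact fun hz ↦ exists_congr fun i ↦ (log_pos_iff (hz i).le).symm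
  have hmeas : MeasurableSet (⋃ i, {x : Fin d → ℝ | 0 < x i}) :=
    .iUnion fun i ↦ measurableSet_lt measurable_const (measurable_pi_apply i)
  simp_rw [hregion, ENNReal.ofReal_mul (exp_pos _).le]
  refine (lintegral_log_pi_mul_prod_inv hmeas
    (fun x ↦ ENNReal.ofReal (exp (gaussianExponent Q l x)))).trans_lt
    ((lintegral_iUnion_le _ _).trans_lt ?_)
  rw [tsum_fintype]
  refine ENNReal.sum_lt_top.2 fun i _ ↦ ?_
  obtain ⟨n, rfl⟩ := Nat.exists_eq_add_one_of_ne_zero i.pos.ne'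
  rw [setLIntegral_exp_gaussianExponent_eq_mul_lintegral_insertNth_zero hsymm
    (fun c ↦ (hker _).2 ⟨c, rfl⟩) hl i]
  exact ENNReal.mul_lt_top ENNReal.ofReal_lt_top
    (hQ.lintegral_exp_gaussianExponent_insertNth_zero_lt_top (fun v ↦ (hker v).1) l i)
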